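/- arXiv:2105.10590 — 4 statements merged into one kernel-verified Lean document; each statement's English description precedes it below -/
import Mathlib

section
/- Elliptical potential identity: Let V₀ ∈ ℝ^{d×d} be positive definite, let x₁,…,xₙ ∈ ℝ^d, and set Vₛ = V₀ + Σ_{i≤s} xᵢxᵢᵀ. Then Σ_{s=1}^n log(1 + ‖xₛ‖²_{V_{s-1}^{-1}}) = log(det(Vₙ)/det(V₀)), where ‖x‖²_A = xᵀAx. -/
open Matrix Finset

/-!
By the matrix determinant lemma, `det V_{s+1} = det V_s * (1 + ‖x_{s+1}‖²_{V_s⁻¹})`, and every `V_s`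
is positive definite, so both factors are positive. Taking logarithms, the sum telescopes to
`log det Vₙ - log det V₀`.
-/

theorem Matrix.det_add_vecMulVec {m α : Type*} [Fintype m] [DecidableEq m] [CommRing α]
    {A : Matrix m m α} (hA : IsUnit A.det) (u v : m → α) :
    (A + vecMulVec u v).det = A.det * (1 + v ⬝ᵥ A⁻¹ *ᵥ u) := by
  have hfactor : A + vecMulVec u v = A * (1 + vecMulVec (A⁻¹ *ᵥ u) v) := by
    rw [Matrix.mul_add, Matrix.mul_one, mul_vecMulVec, mulVec_mulVec, mul_nonsing_inv A hA,
      one_mulVec]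
  rw [hfactor, det_mul, vecMulVec_eq Unit, det_one_add_replicateCol_mul_replicateRow]

theorem Matrix.PosDef.log_det_add_vecMulVec_self {m : Type*} [Fintype m] [DecidableEq m]
    {A : Matrix m m ℝ} (hA : A.PosDef) (u : m → ℝ) :
    Real.log (A + vecMulVec u u).det = Real.log A.det + Real.log (1 + u ⬝ᵥ A⁻¹ *ᵥ u) := by
  have hquad : 0 ≤ u ⬝ᵥ A⁻¹ *ᵥ u := hA.inv.posSemidef.dotProduct_mulVec_nonneg u
  rw [det_add_vecMulVec hA.det_pos.ne'.isUnit, Real.log_mul hA.det_pos.ne' (by positivity)]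

theorem sum_log_one_add_dotProduct_inv_mulVec {m : Type*} [Fintype m] [DecidableEq m] {N : ℕ}
    {V : ℕ → Matrix m m ℝ} {u : Fin N → m → ℝ} (hV0 : (V 0).PosDef)
    (hV : ∀ k : Fin N, V (k + 1) = V k + vecMulVec (u k) (u k)) :
    ∑ k : Fin N, Real.log (1 + u k ⬝ᵥ (V k)⁻¹ *ᵥ u k) = Real.log ((V N).det / (V 0).det) := by
  have hpos : ∀ k ≤ N, (V k).PosDef := by
    intro k hk
    induction k with
    | zero => exact hV0
    | succ k ih =>
      rw [hV ⟨k, hk⟩]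
      exact (ih (by omega)).add_posSemidef (posSemidef_vecMulVec_self_star _)
  let g k := Real.log (V k).det
  calc ∑ k : Fin N, Real.log (1 + u k ⬝ᵥ (V k)⁻¹ *ᵥ u k)
      = ∑ k : Fin N, (g (k + 1) - g k) := by
        refine Finset.sum_congr rfl fun k _ => ?_
        dsimp only [g]
        rw [eq_sub_iff_add_eq', hV k, (hpos k k.is_lt.le).log_det_add_vecMulVec_self]
    _ = g N - g 0 := by
        rw [Fin.sum_univ_eq_sum_range (fun k => g (k + 1) - g k), Finset.sum_range_sub]
    _ = Real.log ((V N).det / (V 0).det) :=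
        (Real.log_div (hpos N le_rfl).det_pos.ne' hV0.det_pos.ne').symm

/-- Elliptical potential identity:
`Σ_{s=1}^n log(1 + ‖x_s‖²_{V_{s-1}⁻¹}) = log(det Vₙ / det V₀)` where
`V_s = V₀ + Σ_{i ≤ s} xᵢ xᵢᵀ`. -/
theorem elliptical_potential_identity (d n : ℕ)
    (V0 : Matrix (Fin d) (Fin d) ℝ) (hV0 : V0.PosDef)
    (x : Fin n → Fin d → ℝ)
    (V : ℕ → Matrix (Fin d) (Fin d) ℝ)
    (hV : ∀ s : ℕ, V s = V0 +
      ∑ i ∈ Finset.univ.filter (fun i : Fin n => (i : ℕ) < s), vecMulVec (x i) (x i)) :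
    ∑ s : Fin n, Real.log (1 + x s ⬝ᵥ (V (s : ℕ))⁻¹ *ᵥ x s)
      = Real.log ((V n).det / V0.det) := by
  have hV_zero : V 0 = V0 := by simp [hV 0]
  have hV_succ : ∀ s : Fin n, V (s + 1) = V s + vecMulVec (x s) (x s) := by
    intro s
    have hfilter : univ.filter (fun i : Fin n => (i : ℕ) < s + 1)
        = insert s (univ.filter fun i : Fin n => (i : ℕ) < s) := by
      ext i
      simp only [mem_filter, mem_univ, true_and, mem_insert, Fin.ext_iff]
      omega
    rw [hV, hV, hfilter, sum_insert (by simp)]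
    abel
  rw [← hV_zero] at hV0 ⊢
  exact sum_log_one_add_dotProduct_inv_mulVec hV0 hV_succ
end

section
/- Misspecification bias bound: Suppose ε_1,…,ε_n ∈ ℝ satisfy |ε_i| ≤ ε, and x_1,…,x_n ∈ ℝ^d. Let V = λI + Σ_{i=1}^n x_i x_iᵀ with λ > 0. Then ‖Σ_{i=1}^n x_i ε_i‖_{V^{-1}} ≤ √n · ε, where ‖y‖_{V^{-1}} = √(yᵀV^{-1}y). -/
/-!
Write `y = ∑ εᵢ xᵢ`, `z = V⁻¹ y` and `S = yᵀ V⁻¹ y = yᵀ z = ∑ εᵢ ⟪xᵢ, z⟫`. Since `V z = y`, the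
Gram part of `V` gives `∑ ⟪xᵢ, z⟫² ≤ zᵀ V z = S`, so Cauchy–Schwarz yields
`S² ≤ (∑ εᵢ²) · S`, hence `S ≤ ∑ εᵢ² ≤ n ε²`.
-/

open Matrix

theorem dotProduct_sum_vecMulVec_self_mulVec {m ι R : Type*} [Fintype m] [Fintype ι] [CommRing R]
    (x : ι → m → R) (v : m → R) :
    v ⬝ᵥ (∑ i, vecMulVec (x i) (x i)) *ᵥ v = ∑ i, (x i ⬝ᵥ v) ^ 2 := by
  simp only [dotProduct_comm v, sum_mulVec, sum_dotProduct, vecMulVec_mulVec, op_smul_eq_smul,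
    smul_dotProduct, smul_eq_mul, sq]

theorem dotProduct_inv_mulVec_le_sum_sq {m ι : Type*} [Fintype m] [DecidableEq m] [Fintype ι]
    {V : Matrix m m ℝ} (hV : IsUnit V.det) (x : ι → m → ℝ)
    (hgram : ∀ v, ∑ i, (x i ⬝ᵥ v) ^ 2 ≤ v ⬝ᵥ V *ᵥ v) (c : ι → ℝ) :
    (∑ i, c i • x i) ⬝ᵥ V⁻¹ *ᵥ (∑ i, c i • x i) ≤ ∑ i, c i ^ 2 := by
  set y := ∑ i, c i • x i
  set z := V⁻¹ *ᵥ y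
  have hVz : V *ᵥ z = y := by rw [mulVec_mulVec, mul_nonsing_inv V hV, one_mulVec]
  have hS : y ⬝ᵥ z = ∑ i, c i * (x i ⬝ᵥ z) := by
    simp only [y, sum_dotProduct, smul_dotProduct, smul_eq_mul]
  have hgram_z : ∑ i, (x i ⬝ᵥ z) ^ 2 ≤ y ⬝ᵥ z := by
    simpa only [hVz, dotProduct_comm z] using hgram z
  have hcs : (y ⬝ᵥ z) ^ 2 ≤ (∑ i, c i ^ 2) * ∑ i, (x i ⬝ᵥ z) ^ 2 :=
    hS ▸ Finset.sum_mul_sq_le_sq_mul_sq _ _ _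
  have hsq : 0 ≤ ∑ i, (x i ⬝ᵥ z) ^ 2 := by positivity
  have hc : 0 ≤ ∑ i, c i ^ 2 := by positivity
  nlinarith

theorem Real.sqrt_sum_sq_le_sqrt_card_mul {ι : Type*} [Fintype ι] {c : ι → ℝ} {ε : ℝ}
    (hc : ∀ i, |c i| ≤ ε) : √(∑ i, c i ^ 2) ≤ √(Fintype.card ι) * ε := by
  cases isEmpty_or_nonempty ι with
  | inl _ => simp
  | inr h =>
    have hε : 0 ≤ ε := (abs_nonneg _).trans (hc h.some)
    have hsum : ∑ i, c i ^ 2 ≤ Fintype.card ι * ε ^ 2 := by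
      refine (Finset.sum_le_card_nsmul _ _ (ε ^ 2) fun i _ ↦ ?_).trans_eq (by simp)
      exact sq_abs (c i) ▸ pow_le_pow_left₀ (abs_nonneg _) (hc i) 2
    calc √(∑ i, c i ^ 2) ≤ √(Fintype.card ι * ε ^ 2) := Real.sqrt_le_sqrt hsum
      _ = √(Fintype.card ι) * ε := by rw [Real.sqrt_mul (by positivity), Real.sqrt_sq hε]

/-- Misspecification bias bound: if `|ε_i| ≤ ε` and `V = λI + Σ x_i x_iᵀ`, then
`‖Σ x_i ε_i‖_{V⁻¹} ≤ √n · ε`. -/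
theorem misspecification_bias_bound (d n : ℕ) (lam ε : ℝ) (hlam : 0 < lam)
    (eps : Fin n → ℝ) (heps : ∀ i, |eps i| ≤ ε)
    (x : Fin n → Fin d → ℝ) :
    Real.sqrt ((∑ i, eps i • x i) ⬝ᵥ
        (lam • (1 : Matrix (Fin d) (Fin d) ℝ) + ∑ i, vecMulVec (x i) (x i))⁻¹ *ᵥ
        (∑ i, eps i • x i))
      ≤ Real.sqrt n * ε := by
  set V := lam • (1 : Matrix (Fin d) (Fin d) ℝ) + ∑ i, vecMulVec (x i) (x i)
  have hlamI : (lam • (1 : Matrix (Fin d) (Fin d) ℝ)).PosDef := PosDef.one.smul hlam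
  have hV : IsUnit V.det := by
    refine (isUnit_iff_isUnit_det V).mp (hlamI.add_posSemidef ?_).isUnit
    exact posSemidef_sum _ fun i _ ↦ by simpa using posSemidef_vecMulVec_self_star (x i)
  have hgram (v : Fin d → ℝ) : ∑ i, (x i ⬝ᵥ v) ^ 2 ≤ v ⬝ᵥ V *ᵥ v := by
    rw [add_mulVec, dotProduct_add, dotProduct_sum_vecMulVec_self_mulVec]
    simpa using hlamI.posSemidef.dotProduct_mulVec_nonneg v
  calc _ ≤ √(∑ i, eps i ^ 2) := Real.sqrt_le_sqrt (dotProduct_inv_mulVec_le_sum_sq hV x hgram eps)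
    _ ≤ √n * ε := by simpa using Real.sqrt_sum_sq_le_sqrt_card_mul heps
end

section
/- If A ⪰ B ≻ 0 are symmetric d×d matrices and det(A) ≤ 2 det(B), then for all θ ∈ ℝ^d, ‖θ‖_A ≤ √2 · ‖θ‖_B, where ‖θ‖_M = √(θᵀMθ). -/
/-!
Conjugating by `B^{-1/2}` turns `A ⪰ B` into `M := B^{-1/2} A B^{-1/2} ⪰ 1`. All eigenvalues of `M`
are then at least `1`, so each of them is bounded by their product `det M = det A / det B`; hence
`M ≤ (det A / det B) • 1`, and conjugating back by `B^{1/2}` gives `A ≤ (det A / det B) • B`.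
-/

open Matrix CFC Ring
open scoped MatrixOrder ComplexOrder

namespace Matrix

variable {n : Type*} [Fintype n]

theorem dotProduct_mulVec_le_of_le {𝕜 : Type*} [RCLike 𝕜] {A B : Matrix n n 𝕜} (h : A ≤ B)
    (x : n → 𝕜) : star x ⬝ᵥ A *ᵥ x ≤ star x ⬝ᵥ B *ᵥ x := by
  simpa [sub_mulVec, dotProduct_sub] using (le_iff.mp h).dotProduct_mulVec_nonneg x

variable [DecidableEq n]

theorem IsHermitian.eigenvalues_le_det {M : Matrix n n ℝ} (hM : M.IsHermitian)
    (h : ∀ j, 1 ≤ hM.eigenvalues j) (i : n) : hM.eigenvalues i ≤ M.det := by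
  rw [hM.det_eq_prod_eigenvalues]
  simpa using Multiset.mem_le_prod_of_one_le h (Finset.mem_univ_val i)

theorem le_det_smul_one_of_one_le {M : Matrix n n ℝ} (h : 1 ≤ M) : M ≤ M.det • 1 := by
  have hM : M.IsHermitian := IsSelfAdjoint.of_nonneg (zero_le_one.trans h)
  rw [CFC.one_le_iff (R := ℝ) M hM, hM.spectrum_real_eq_range_eigenvalues] at h
  rw [← Algebra.algebraMap_eq_smul_one, le_algebraMap_iff_spectrum_le hM,
    hM.spectrum_real_eq_range_eigenvalues]
  rintro _ ⟨i, rfl⟩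
  exact hM.eigenvalues_le_det (fun j => h _ ⟨j, rfl⟩) i

theorem PosDef.le_det_div_det_smul_of_le {A B : Matrix n n ℝ} (hB : B.PosDef) (hBA : B ≤ A) :
    A ≤ (A.det / B.det) • B := by
  have : IsStrictlyPositive B := hB.isStrictlyPositive
  set M := conjSqrt B⁻¹ʳ A
  have hA : conjSqrt B M = A := conjSqrt_conjSqrt_ringInverse B A
  have hM : 1 ≤ M := conjSqrt_ringInverse_self B ▸ conjSqrt_le_conjSqrt hBA
  have hdet : A.det = B.det * M.det := by
    rw [← hA, conjSqrt_apply, det_mul, det_mul, mul_right_comm, ← det_mul, sqrt_mul_sqrt_self B]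
  calc A = conjSqrt B M := hA.symm
    _ ≤ conjSqrt B (M.det • 1) := conjSqrt_le_conjSqrt (le_det_smul_one_of_one_le hM)
    _ = (A.det / B.det) • B := by
      rw [map_smul, conjSqrt_one B, hdet, mul_div_cancel_left₀ _ hB.det_pos.ne']

end Matrix

theorem norm_le_sqrt_two_norm_of_det_le_general (d : ℕ)
    (A B : Matrix (Fin d) (Fin d) ℝ) (hB : B.PosDef)
    (hAB : (A - B).PosSemidef) (hdet : A.det ≤ 2 * B.det)
    (θ : Fin d → ℝ) :
    Real.sqrt (θ ⬝ᵥ A *ᵥ θ) ≤ Real.sqrt 2 * Real.sqrt (θ ⬝ᵥ B *ᵥ θ) := by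
  have hle : A ≤ (A.det / B.det) • B := hB.le_det_div_det_smul_of_le hAB
  have hratio : A.det / B.det ≤ 2 := (div_le_iff₀ hB.det_pos).2 hdet
  have hquad : θ ⬝ᵥ A *ᵥ θ ≤ 2 * (θ ⬝ᵥ B *ᵥ θ) :=
    calc θ ⬝ᵥ A *ᵥ θ ≤ A.det / B.det * (θ ⬝ᵥ B *ᵥ θ) := by
          simpa [smul_mulVec, dotProduct_smul] using dotProduct_mulVec_le_of_le hle θ
      _ ≤ 2 * (θ ⬝ᵥ B *ᵥ θ) := by
          gcongr
          simpa using hB.posSemidef.dotProduct_mulVec_nonneg θ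
  calc Real.sqrt (θ ⬝ᵥ A *ᵥ θ) ≤ Real.sqrt (2 * (θ ⬝ᵥ B *ᵥ θ)) := Real.sqrt_le_sqrt hquad
    _ = Real.sqrt 2 * Real.sqrt (θ ⬝ᵥ B *ᵥ θ) := Real.sqrt_mul zero_le_two _

/-- Non-doubling round condition: if `A ⪰ B ≻ 0` and `det A ≤ 2 det B`, then
`‖θ‖_A ≤ √2 ‖θ‖_B` for all `θ`. -/
theorem norm_le_sqrt_two_norm_of_det_le (d : ℕ)
    (A B : Matrix (Fin d) (Fin d) ℝ) (hA : A.IsHermitian) (hB : B.PosDef)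
    (hAB : (A - B).PosSemidef) (hdet : A.det ≤ 2 * B.det)
    (θ : Fin d → ℝ) :
    Real.sqrt (θ ⬝ᵥ A *ᵥ θ) ≤ Real.sqrt 2 * Real.sqrt (θ ⬝ᵥ B *ᵥ θ) :=
  norm_le_sqrt_two_norm_of_det_le_general d A B hB hAB hdet θ
end

section
/- Sum of log terms bound: Let λ > 0, L > 0, and x_1,…,xₙ ∈ ℝ^d with ‖x_i‖ ≤ L. With V_0 = λI and V_s = V_0 + Σ_{i≤s} x_i x_iᵀ, we have Σ_{s=1}^n log(1 + ‖x_s‖²_{V_{s-1}^{-1}}) ≤ d log(1 + nL²/(dλ)) ≤ d log(1 + nL²/λ). -/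
/-!
Since `V_s = V_{s-1} + x_s x_sᵀ`, the matrix determinant lemma gives
`det V_s = det V_{s-1} · (1 + ‖x_s‖²_{V_{s-1}⁻¹})`, so the sum of logarithms telescopes to
`log det V_n - log det V_0`. By AM–GM on the eigenvalues, `det V_n ≤ (tr V_n / d)^d`, and
`tr V_n ≤ dλ + nL²`, while `det V_0 = λ^d`.
-/

open Matrix Finset

lemma Real.prod_le_sum_div_card_pow {ι : Type*} (s : Finset ι) (z : ι → ℝ)
    (hz : ∀ i ∈ s, 0 ≤ z i) : ∏ i ∈ s, z i ≤ ((∑ i ∈ s, z i) / #s) ^ #s := by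
  obtain rfl | hs := s.eq_empty_or_nonempty
  · simp
  have hprod : 0 ≤ ∏ i ∈ s, z i := prod_nonneg hz
  have hgm : (∏ i ∈ s, z i) ^ ((#s : ℝ)⁻¹) ≤ (∑ i ∈ s, z i) / #s := by
    simpa using Real.geom_mean_le_arith_mean s 1 z (fun _ _ => zero_le_one) (by simpa) hz
  calc ∏ i ∈ s, z i = ((∏ i ∈ s, z i) ^ ((#s : ℝ)⁻¹)) ^ #s :=
        (Real.rpow_inv_natCast_pow hprod hs.card_pos.ne').symm
    _ ≤ ((∑ i ∈ s, z i) / #s) ^ #s := by gcongr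

theorem Fin.sum_filter_val_lt_succ {M : Type*} [AddCommMonoid M] {n : ℕ} (f : Fin n → M)
    (s : Fin n) :
    ∑ i ∈ univ.filter (fun i : Fin n => (i : ℕ) < s + 1), f i =
      ∑ i ∈ univ.filter (fun i : Fin n => (i : ℕ) < s), f i + f s := by
  have hfilter : univ.filter (fun i : Fin n => (i : ℕ) < s + 1)
      = insert s (univ.filter fun i : Fin n => (i : ℕ) < s) := by
    ext i
    simp [Fin.ext_iff]
    omega
  rw [hfilter, sum_insert (by simp), add_comm]

namespace Matrix

variable {m : Type*} [Fintype m] [DecidableEq m]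

theorem det_add_vecMulVec_s17 {R : Type*} [CommRing R] {A : Matrix m m R} (hA : IsUnit A.det)
    (u v : m → R) : (A + vecMulVec u v).det = A.det * (1 + v ⬝ᵥ A⁻¹ *ᵥ u) := by
  rw [vecMulVec_eq Unit, det_add_replicateCol_mul_replicateRow hA, Matrix.mul_assoc,
    ← replicateCol_mulVec]
  congr 1
  exact det_unique _

theorem PosSemidef.det_le_pow_of_trace_le {A : Matrix m m ℝ} (hA : A.PosSemidef) {c : ℝ}
    (h : A.trace ≤ Fintype.card m * c) : A.det ≤ c ^ Fintype.card m := by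
  cases isEmpty_or_nonempty m
  · simp
  have htrace : A.trace = ∑ i, hA.1.eigenvalues i := by
    simpa using hA.1.trace_eq_sum_eigenvalues
  have hmean : A.trace / Fintype.card m ≤ c :=
    (div_le_iff₀' (Nat.cast_pos.mpr Fintype.card_pos)).mpr h
  calc A.det = ∏ i, hA.1.eigenvalues i := by simpa using hA.1.det_eq_prod_eigenvalues
    _ ≤ (A.trace / Fintype.card m) ^ Fintype.card m := by
      rw [htrace]
      exact Real.prod_le_sum_div_card_pow _ _ fun i _ => hA.eigenvalues_nonneg i
    _ ≤ c ^ Fintype.card m :=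
      pow_le_pow_left₀ (div_nonneg hA.trace_nonneg (Nat.cast_nonneg _)) hmean _

theorem PosDef.log_det_add_vecMulVec_self_s17 {A : Matrix m m ℝ} (hA : A.PosDef) (x : m → ℝ) :
    Real.log (A + vecMulVec x x).det = Real.log A.det + Real.log (1 + x ⬝ᵥ A⁻¹ *ᵥ x) := by
  have hq : 0 ≤ x ⬝ᵥ A⁻¹ *ᵥ x := by
    simpa using hA.inv.posSemidef.dotProduct_mulVec_nonneg x
  rw [det_add_vecMulVec_s17 hA.det_pos.ne'.isUnit, Real.log_mul hA.det_pos.ne' (by positivity)]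

theorem sum_log_one_add_eq_log_det_sub {n : ℕ} (V : ℕ → Matrix m m ℝ)
    (x : Fin n → m → ℝ) (hV : ∀ s, (V s).PosDef)
    (hstep : ∀ s : Fin n, V (s + 1) = V s + vecMulVec (x s) (x s)) :
    ∑ s : Fin n, Real.log (1 + x s ⬝ᵥ (V s)⁻¹ *ᵥ x s) =
      Real.log (V n).det - Real.log (V 0).det :=
  calc ∑ s : Fin n, Real.log (1 + x s ⬝ᵥ (V s)⁻¹ *ᵥ x s)
      = ∑ s : Fin n, (Real.log (V (s + 1)).det - Real.log (V s).det) :=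
        sum_congr rfl fun s _ => by rw [hstep, (hV s).log_det_add_vecMulVec_self_s17]; ring
    _ = ∑ s ∈ range n, (Real.log (V (s + 1)).det - Real.log (V s).det) :=
        Fin.sum_univ_eq_sum_range (fun s => Real.log (V (s + 1)).det - Real.log (V s).det) n
    _ = Real.log (V n).det - Real.log (V 0).det :=
        sum_range_sub (fun s => Real.log (V s).det) n

section Regularized

variable {ι : Type*} (s : Finset ι) (x : ι → m → ℝ)

theorem posDef_smul_one_add_sum_vecMulVec {lam : ℝ} (hlam : 0 < lam) :
    (lam • 1 + ∑ i ∈ s, vecMulVec (x i) (x i)).PosDef :=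
  (PosDef.one.smul hlam).add_posSemidef
    (posSemidef_sum s fun i _ => by simpa using posSemidef_vecMulVec_self_star (x i))

theorem trace_smul_one_add_sum_vecMulVec (lam : ℝ) :
    (lam • 1 + ∑ i ∈ s, vecMulVec (x i) (x i)).trace =
      Fintype.card m * lam + ∑ i ∈ s, x i ⬝ᵥ x i := by
  simp [trace_sum, mul_comm]

end Regularized

end Matrix

theorem sum_log_le_general (d n : ℕ) (hd : 0 < d) (lam L : ℝ) (hlam : 0 < lam)
    (x : Fin n → Fin d → ℝ) (hx : ∀ i, Real.sqrt (∑ j, x i j ^ 2) ≤ L)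
    (V : ℕ → Matrix (Fin d) (Fin d) ℝ)
    (hV : ∀ s : ℕ, V s = lam • (1 : Matrix (Fin d) (Fin d) ℝ) +
      ∑ i ∈ Finset.univ.filter (fun i : Fin n => (i : ℕ) < s), vecMulVec (x i) (x i)) :
    (∑ s : Fin n, Real.log (1 + x s ⬝ᵥ (V (s : ℕ))⁻¹ *ᵥ x s)
        ≤ d * Real.log (1 + n * L ^ 2 / (d * lam)))
    ∧ (d : ℝ) * Real.log (1 + n * L ^ 2 / (d * lam))
        ≤ d * Real.log (1 + n * L ^ 2 / lam) := by
  have hVpos (s : ℕ) : (V s).PosDef := hV s ▸ posDef_smul_one_add_sum_vecMulVec _ _ hlam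
  have hstep (s : Fin n) : V (s + 1) = V s + vecMulVec (x s) (x s) := by
    rw [hV, hV, Fin.sum_filter_val_lt_succ, add_assoc]
  have hdet0 : (V 0).det = lam ^ d := by simp [hV]
  have hnorm (i : Fin n) : x i ⬝ᵥ x i ≤ L ^ 2 := by
    simpa [dotProduct, sq] using (Real.sqrt_le_iff.mp (hx i)).2
  have htrace : (V n).trace ≤ d * (lam * (1 + n * L ^ 2 / (d * lam))) :=
    calc (V n).trace ≤ d * lam + n * L ^ 2 := by
          rw [hV, trace_smul_one_add_sum_vecMulVec]
          simpa using sum_le_card_nsmul univ _ _ fun i _ => hnorm i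
      _ = d * (lam * (1 + n * L ^ 2 / (d * lam))) := by field_simp
  refine ⟨?_, ?_⟩
  · calc ∑ s : Fin n, Real.log (1 + x s ⬝ᵥ (V s)⁻¹ *ᵥ x s)
        = Real.log (V n).det - Real.log (V 0).det :=
          sum_log_one_add_eq_log_det_sub V x hVpos hstep
      _ ≤ Real.log ((lam * (1 + n * L ^ 2 / (d * lam))) ^ d) - Real.log (lam ^ d) := by
          rw [hdet0]
          gcongr
          · exact (hVpos n).det_pos
          · simpa using (hVpos n).posSemidef.det_le_pow_of_trace_le (by simpa using htrace)
      _ = d * Real.log (1 + n * L ^ 2 / (d * lam)) := by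
          rw [mul_pow, Real.log_mul (by positivity) (by positivity), Real.log_pow, Real.log_pow]
          ring
  · gcongr
    exact le_mul_of_one_le_left hlam.le (by exact_mod_cast hd)

/-- Sum of log terms bound: with `V₀ = λI` and `V_s = V₀ + Σ_{i≤s} x_i x_iᵀ`,
`Σ_{s=1}^n log(1 + ‖x_s‖²_{V_{s-1}⁻¹}) ≤ d log(1 + nL²/(dλ)) ≤ d log(1 + nL²/λ)`. -/
theorem sum_log_le (d n : ℕ) (hd : 0 < d) (lam L : ℝ) (hlam : 0 < lam) (hL : 0 < L)
    (x : Fin n → Fin d → ℝ) (hx : ∀ i, Real.sqrt (∑ j, x i j ^ 2) ≤ L)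
    (V : ℕ → Matrix (Fin d) (Fin d) ℝ)
    (hV : ∀ s : ℕ, V s = lam • (1 : Matrix (Fin d) (Fin d) ℝ) +
      ∑ i ∈ Finset.univ.filter (fun i : Fin n => (i : ℕ) < s), vecMulVec (x i) (x i)) :
    (∑ s : Fin n, Real.log (1 + x s ⬝ᵥ (V (s : ℕ))⁻¹ *ᵥ x s)
        ≤ d * Real.log (1 + n * L ^ 2 / (d * lam)))
    ∧ (d : ℝ) * Real.log (1 + n * L ^ 2 / (d * lam))
        ≤ d * Real.log (1 + n * L ^ 2 / lam) :=
  sum_log_le_general d n hd lam L hlam x hx V hV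
end
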